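/- Let F, G be complex matrices with m×n and p×n shapes respectively, ν_f, ν_g > 0. The maximum over unit-trace Hermitian positive semidefinite Q of the generalized Rayleigh quotient (tr(F Q F*) + ν_f)/(tr(G Q G*) + ν_g) is attained at a rank-one Q, i.e., there exists a unit vector v ∈ ℂ^n such that Q* = v v* achieves the maximum. -/

import Mathlib

open Matrix
open scoped ComplexOrder

/-!
The objective is a ratio `a Q / b Q` of two real-affine functions of `Q` with `b > 0` on the
feasible set, so each sublevel set `{Q | a Q ≤ c * b Q}` is a half-space, hence convex. By the
spectral theorem a unit-trace positive semidefinite matrix is a convex combination of rank-one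
projections `v vᴴ` with `v` a unit vector. Taking `c` to be the maximum of the ratio over the
compact unit sphere, all these projections lie in the sublevel set, and so does their convex hull.
-/

theorem div_le_of_mem_convexHull {E : Type*} [AddCommGroup E] [Module ℝ E]
    {a b : E →ᵃ[ℝ] ℝ} {s : Set E} {x : E} {c : ℝ}
    (hx : x ∈ convexHull ℝ s) (hbx : 0 < b x) (hs : ∀ y ∈ s, a y ≤ c * b y) :
    a x / b x ≤ c := by
  have hconv : Convex ℝ {y | a y ≤ c * b y} := by
    have h := (convex_Iic (0 : ℝ)).affine_preimage (a - c • b)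
    rwa [show ⇑(a - c • b) ⁻¹' Set.Iic 0 = {y | a y ≤ c * b y} by ext; simp] at h
  rw [div_le_iff₀ hbx]
  exact convexHull_min hs hconv hx

theorem isCompact_setOf_sum_norm_sq_eq_one {𝕜 ι : Type*} [RCLike 𝕜] [Fintype ι] :
    IsCompact {v : ι → 𝕜 | ∑ i, ‖v i‖ ^ 2 = 1} := by
  convert (isCompact_sphere (0 : EuclideanSpace 𝕜 ι) 1).image (PiLp.continuous_ofLp 2 _)
  ext v
  simp only [Set.mem_ofPred_eq, Set.mem_image, mem_sphere_zero_iff_norm, EuclideanSpace.norm_eq,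
    Real.sqrt_eq_one]
  exact ⟨fun h => ⟨WithLp.toLp 2 v, h, rfl⟩, by rintro ⟨x, hx, rfl⟩; exact hx⟩

namespace Matrix

section RCLike

variable {𝕜 n : Type*} [RCLike 𝕜] [Fintype n]

theorem trace_vecMulVec_self_star (v : n → 𝕜) :
    (vecMulVec v (star v)).trace = ((∑ i, ‖v i‖ ^ 2 : ℝ) : 𝕜) := by
  simp [trace_vecMulVec, dotProduct, RCLike.mul_conj]

theorem IsHermitian.eq_sum_smul_vecMulVec [DecidableEq n] {A : Matrix n n 𝕜}
    (hA : A.IsHermitian) :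
    A = ∑ i, hA.eigenvalues i •
      vecMulVec ⇑(hA.eigenvectorBasis i) (star ⇑(hA.eigenvectorBasis i)) := by
  conv_lhs => rw [hA.spectral_theorem]
  ext a b
  simp only [Unitary.conjStarAlgAut_apply, mul_apply, diagonal_apply, Matrix.sum_apply,
    Matrix.smul_apply, vecMulVec_apply, RCLike.real_smul_eq_coe_mul, Function.comp_apply,
    mul_ite, mul_zero, Finset.sum_ite_eq', Finset.mem_univ, if_true, star_apply,
    IsHermitian.eigenvectorUnitary_apply, Pi.star_apply]
  exact Finset.sum_congr rfl fun j _ => by ring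

theorem PosSemidef.mem_convexHull_vecMulVec {Q : Matrix n n 𝕜} (hQ : Q.PosSemidef)
    (htr : Q.trace = 1) :
    Q ∈ convexHull ℝ
      ((fun v => vecMulVec v (star v)) '' {v : n → 𝕜 | ∑ i, ‖v i‖ ^ 2 = 1}) := by
  classical
  have hH := hQ.isHermitian
  have hsum : ∑ i, hH.eigenvalues i = 1 := by
    have h := hH.trace_eq_sum_eigenvalues
    rw [htr] at h
    exact_mod_cast h.symm
  have hunit (i : n) : ∑ a, ‖hH.eigenvectorBasis i a‖ ^ 2 = 1 := by
    have h := hH.eigenvectorBasis.orthonormal.1 i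
    rwa [EuclideanSpace.norm_eq, Real.sqrt_eq_one] at h
  rw [hH.eq_sum_smul_vecMulVec]
  exact (convex_convexHull ℝ _).sum_mem (fun i _ => hQ.eigenvalues_nonneg i) hsum
    fun i _ => subset_convexHull ℝ _ ⟨_, hunit i, rfl⟩

end RCLike

variable {m n : Type*} [Fintype m] [Fintype n]

def reTraceConj (F : Matrix m n ℂ) : Matrix n n ℂ →ₗ[ℝ] ℝ where
  toFun Q := (F * Q * Fᴴ).trace.re
  map_add' P Q := by simp [Matrix.mul_add, Matrix.add_mul, trace_add]
  map_smul' r Q := by simp [Matrix.mul_smul, Matrix.smul_mul, trace_smul]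

theorem reTraceConj_nonneg (F : Matrix m n ℂ) {Q : Matrix n n ℂ} (hQ : Q.PosSemidef) :
    0 ≤ reTraceConj F Q :=
  (Complex.nonneg_iff.1 (hQ.mul_mul_conjTranspose_same F).trace_nonneg).1

end Matrix

theorem stmt17_general (m p n : ℕ) (hn : 0 < n)
    (F : Matrix (Fin m) (Fin n) ℂ) (G : Matrix (Fin p) (Fin n) ℂ)
    (νf νg : ℝ) (hνg : 0 < νg) :
    ∃ v : Fin n → ℂ, (∑ i, ‖v i‖ ^ 2 = 1) ∧
      (Matrix.of fun i j => v i * star (v j)).PosSemidef ∧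
      (Matrix.of fun i j => v i * star (v j)).trace = 1 ∧
      ∀ Q : Matrix (Fin n) (Fin n) ℂ, Q.PosSemidef → Q.trace = 1 →
        ((F * Q * Fᴴ).trace.re + νf) / ((G * Q * Gᴴ).trace.re + νg) ≤
          ((F * (Matrix.of fun i j => v i * star (v j)) * Fᴴ).trace.re + νf) /
            ((G * (Matrix.of fun i j => v i * star (v j)) * Gᴴ).trace.re + νg) := by
  let a := (reTraceConj F).toAffineMap + AffineMap.const ℝ (Matrix (Fin n) (Fin n) ℂ) νf
  let b := (reTraceConj G).toAffineMap + AffineMap.const ℝ (Matrix (Fin n) (Fin n) ℂ) νg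
  have hb {Q : Matrix (Fin n) (Fin n) ℂ} (hQ : Q.PosSemidef) : 0 < b Q :=
    add_pos_of_nonneg_of_pos (reTraceConj_nonneg G hQ) hνg
  have hcont :
      Continuous fun v : Fin n → ℂ => a (vecMulVec v (star v)) / b (vecMulVec v (star v)) :=
    Continuous.div (by dsimp [a, reTraceConj]; fun_prop) (by dsimp [b, reTraceConj]; fun_prop)
      fun v => (hb (posSemidef_vecMulVec_self_star v)).ne'
  obtain ⟨v, hv, hvmax⟩ := isCompact_setOf_sum_norm_sq_eq_one.exists_isMaxOn
    ⟨Pi.single ⟨0, hn⟩ 1, by simp [Pi.single_apply, apply_ite (fun z : ℂ => ‖z‖ ^ 2)]⟩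
    hcont.continuousOn
  refine ⟨v, hv, posSemidef_vecMulVec_self_star v, ?_, fun Q hQ htr => ?_⟩
  · show (vecMulVec v (star v)).trace = 1
    rw [trace_vecMulVec_self_star, Set.mem_ofPred_eq.mp hv, RCLike.ofReal_one]
  · refine div_le_of_mem_convexHull (a := a) (b := b) (hQ.mem_convexHull_vecMulVec htr) (hb hQ) ?_
    rintro _ ⟨u, hu, rfl⟩
    exact (div_le_iff₀ (hb (posSemidef_vecMulVec_self_star u))).1 (hvmax hu)

/-- The maximum of the generalized Rayleigh quotient
`Q ↦ (tr(F Q Fᴴ) + ν_f)/(tr(G Q Gᴴ) + ν_g)` over unit-trace Hermitian positive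
semidefinite `Q` is attained at a rank-one matrix `Q* = v vᴴ` for some unit
vector `v`. -/
theorem stmt17 (m p n : ℕ) (hn : 0 < n)
    (F : Matrix (Fin m) (Fin n) ℂ) (G : Matrix (Fin p) (Fin n) ℂ)
    (νf νg : ℝ) (hνf : 0 < νf) (hνg : 0 < νg) :
    ∃ v : Fin n → ℂ, (∑ i, ‖v i‖ ^ 2 = 1) ∧
      (Matrix.of fun i j => v i * star (v j)).PosSemidef ∧
      (Matrix.of fun i j => v i * star (v j)).trace = 1 ∧
      ∀ Q : Matrix (Fin n) (Fin n) ℂ, Q.PosSemidef → Q.trace = 1 →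
        ((F * Q * Fᴴ).trace.re + νf) / ((G * Q * Gᴴ).trace.re + νg) ≤
          ((F * (Matrix.of fun i j => v i * star (v j)) * Fᴴ).trace.re + νf) /
            ((G * (Matrix.of fun i j => v i * star (v j)) * Gᴴ).trace.re + νg) :=
  stmt17_general m p n hn F G νf νg hνg
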